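/- Suppose the first component of r is the negative essential infimum and the remaining d−1 components are identical finite convex monetary risk measures ρ. Then for any essentially appropriate random vector C in R^d, ρ_s(C + H_t) = −H_{t − (d−1)ρ(D/(d−1))}, where D = Σ_{i=1}^d C^{(i)}. -/

import Mathlib

open MeasureTheory Pointwise Filter
open scoped ENNReal NNReal

noncomputable section

variable {Ω : Type*}

/-- The family of `p`-integrable selections of a random set `X`. -/
def Sel [MeasurableSpace Ω] (μ : Measure Ω) (p : ℝ≥0∞) {d : ℕ}
    (X : Ω → Set (Fin d → ℝ)) : Set (Ω → Fin d → ℝ) :=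
  {ξ | MemLp ξ p μ ∧ ∀ᵐ ω ∂μ, ξ ω ∈ X ω}

/-- The selection risk measure `ρ_s(X) = cl ⋃_{ξ ∈ L^p(X)} (r(ξ) + ℝ_+^d)`. -/
def selRisk [MeasurableSpace Ω] (μ : Measure Ω) (p : ℝ≥0∞) {d : ℕ}
    (r : Fin d → (Ω → ℝ) → ℝ) (X : Ω → Set (Fin d → ℝ)) : Set (Fin d → ℝ) :=
  closure (⋃ ξ ∈ Sel μ p X, {x | ∀ i, r i (fun ω => ξ ω i) ≤ x i})

/-- The half-space `H_t = {x : Σ_i x_i ≤ t}`. -/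
def Hset (d : ℕ) (t : ℝ) : Set (Fin d → ℝ) := {x | ∑ i, x i ≤ t}

/-- The set `I_κ = ℝ_-^d ∪ H_{-κ}` of transfers with fixed transaction cost `κ`. -/
def Iset (d : ℕ) (κ : ℝ) : Set (Fin d → ℝ) := {x | x ≤ 0} ∪ Hset d (-κ)

/-! If `x` dominates the risk vector of a selection `ξ`, the first agent holds at least `-x 0`
almost surely, so the other `d - 1` agents hold at most `D + t + x 0` in total; monotonicity,
Jensen's inequality and cash invariance of `ρ` then give `(d - 1) ρ(D / (d - 1)) - t - x 0` as a
lower bound for the sum of their risks. Conversely every such `x` is attained exactly: the first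
agent takes the constant `-x 0`, and the others share `D` equally, each shifted by a constant. -/

open Finset

lemma mem_add_image_Hset_iff {d : ℕ} {c y : Fin d → ℝ} {t : ℝ} :
    y ∈ (fun x => c + x) '' Hset d t ↔ ∑ i, y i ≤ ∑ i, c i + t := by
  constructor
  · rintro ⟨x, hx, rfl⟩
    simp only [Pi.add_apply, sum_add_distrib]
    exact add_le_add_right hx _
  · intro hy
    refine ⟨y - c, ?_, add_sub_cancel c y⟩
    change ∑ i, (y i - c i) ≤ t
    rw [sum_sub_distrib]
    linarith

lemma MeasureTheory.MemLp.ae_essInf_le [MeasurableSpace Ω] {μ : Measure Ω} {f : Ω → ℝ}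
    (hf : MemLp f ∞ μ) : ∀ᵐ ω ∂μ, essInf f μ ≤ f ω :=
  _root_.ae_essInf_le ⟨-lpNorm f ∞ μ, eventually_map.2 <| by
    filter_upwards [ae_le_lpNorm_exponent_top hf] with ω hω using neg_le_of_abs_le hω⟩

lemma ConvexOn.map_sum_div_card_le {f : (Ω → ℝ) → ℝ} (hf : ConvexOn ℝ Set.univ f)
    {ι : Type*} [Fintype ι] [Nonempty ι] (p : ι → Ω → ℝ) :
    f (fun ω => (∑ i, p i ω) / Fintype.card ι) ≤ (∑ i, f (p i)) / Fintype.card ι := by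
  have hp : (fun ω => (∑ i, p i ω) / Fintype.card ι) = ∑ i, (Fintype.card ι : ℝ)⁻¹ • p i := by
    ext ω
    simp [div_eq_inv_mul, mul_sum]
  rw [hp, div_eq_inv_mul, mul_sum]
  exact hf.map_sum_le (fun _ _ => by positivity)
    (by simp [Fintype.card_ne_zero]) (fun _ _ => Set.mem_univ _)

section SelRisk

variable [MeasurableSpace Ω] {μ : Measure Ω} {ρ : (Ω → ℝ) → ℝ} {n : ℕ}
  {r : Fin (n + 2) → (Ω → ℝ) → ℝ} {C : Ω → Fin (n + 2) → ℝ} {t : ℝ} {x : Fin (n + 2) → ℝ}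

lemma le_sum_of_mem_Sel_add_Hset (hconv : ConvexOn ℝ Set.univ ρ)
    (hmono : ∀ (ξ η : Ω → ℝ), (∀ᵐ ω ∂μ, ξ ω ≤ η ω) → ρ η ≤ ρ ξ)
    (hcash : ∀ (ξ : Ω → ℝ) (c : ℝ), ρ (fun ω => ξ ω + c) = ρ ξ - c)
    (hr0 : ∀ ξ : Ω → ℝ, r 0 ξ = -essInf ξ μ) (hrs : ∀ j : Fin (n + 1), r j.succ = ρ)
    {ξ : Ω → Fin (n + 2) → ℝ} (hξ : ξ ∈ Sel μ ∞ (fun ω => (fun x => C ω + x) '' Hset (n + 2) t))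
    (hx : ∀ i, r i (fun ω => ξ ω i) ≤ x i) :
    (n + 1) * ρ (fun ω => (∑ i, C ω i) / (n + 1)) - t ≤ ∑ i, x i := by
  obtain ⟨hξLp, hξC⟩ := hξ
  have hξ0 : ∀ᵐ ω ∂μ, -x 0 ≤ ξ ω 0 := by
    have hξ0Lp : MemLp (fun ω => ξ ω 0) ∞ μ :=
      (ContinuousLinearMap.proj 0 : (Fin (n + 2) → ℝ) →L[ℝ] ℝ).comp_memLp' hξLp
    have hx0 : -essInf (fun ω => ξ ω 0) μ ≤ x 0 := by simpa only [hr0] using hx 0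
    filter_upwards [hξ0Lp.ae_essInf_le] with ω hω
    exact (neg_le.1 hx0).trans hω
  have hsum : ∀ᵐ ω ∂μ, ∑ j : Fin (n + 1), ξ ω j.succ ≤ ∑ i, C ω i + (t + x 0) := by
    filter_upwards [hξ0, hξC] with ω h0 hC
    rw [mem_add_image_Hset_iff, Fin.sum_univ_succ] at hC
    linarith
  have hn : (0 : ℝ) < n + 1 := by positivity
  have key : ρ (fun ω => (∑ i, C ω i) / (n + 1)) - (t + x 0) / (n + 1)
      ≤ (∑ j : Fin (n + 1), x j.succ) / (n + 1) :=
    calc ρ (fun ω => (∑ i, C ω i) / (n + 1)) - (t + x 0) / (n + 1)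
        = ρ (fun ω => (∑ i, C ω i + (t + x 0)) / (n + 1)) := by
          simp_rw [add_div]; exact (hcash _ _).symm
      _ ≤ ρ (fun ω => (∑ j : Fin (n + 1), ξ ω j.succ) / (n + 1)) :=
          hmono _ _ (hsum.mono fun ω h => by gcongr)
      _ ≤ (∑ j : Fin (n + 1), ρ (fun ω => ξ ω j.succ)) / (n + 1) := by
          simpa using hconv.map_sum_div_card_le fun (j : Fin (n + 1)) ω => ξ ω j.succ
      _ ≤ (∑ j : Fin (n + 1), x j.succ) / (n + 1) := by
          gcongr with j
          exact hrs j ▸ hx j.succ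
  rw [Fin.sum_univ_succ]
  rw [sub_le_iff_le_add, ← add_div, le_div_iff₀ hn] at key
  linarith

lemma exists_mem_Sel_add_Hset_of_le_sum [NeZero μ]
    (hcash : ∀ (ξ : Ω → ℝ) (c : ℝ), ρ (fun ω => ξ ω + c) = ρ ξ - c)
    (hr0 : ∀ ξ : Ω → ℝ, r 0 ξ = -essInf ξ μ) (hrs : ∀ j : Fin (n + 1), r j.succ = ρ)
    (hC : MemLp C ∞ μ) (hx : (n + 1) * ρ (fun ω => (∑ i, C ω i) / (n + 1)) - t ≤ ∑ i, x i) :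
    ∃ ξ ∈ Sel μ ∞ (fun ω => (fun x => C ω + x) '' Hset (n + 2) t),
      ∀ i, r i (fun ω => ξ ω i) ≤ x i := by
  set D : Ω → ℝ := fun ω => (∑ i, C ω i) / (n + 1) with hD
  let a : Fin (n + 2) → ℝ := Fin.cons (-x 0) fun j => ρ D - x j.succ
  let b : Fin (n + 2) → ℝ := Fin.cons 0 fun _ => 1
  have hξ0 : ∀ ω, (a + D ω • b) 0 = -x 0 := by simp [a, b]
  have hξs : ∀ ω (j : Fin (n + 1)), (a + D ω • b) j.succ = D ω + (ρ D - x j.succ) := by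
    simp [a, b, add_comm]
  refine ⟨fun ω => a + D ω • b, ⟨?_, ae_of_all _ fun ω => ?_⟩, Fin.cases ?_ fun j => ?_⟩
  · have hsum : MemLp (fun ω => ∑ i, C ω i) ∞ μ := memLp_finsetSum _ fun i _ =>
      (ContinuousLinearMap.proj i : (Fin (n + 2) → ℝ) →L[ℝ] ℝ).comp_memLp' hC
    have hDLp : MemLp D ∞ μ := by
      simpa only [hD, div_eq_mul_inv] using hsum.mul_const (n + 1 : ℝ)⁻¹
    have hDb : MemLp (D • fun _ => b) ∞ μ := (memLp_top_const b).smul hDLp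
    exact (memLp_top_const a).add hDb
  · rw [mem_add_image_Hset_iff, Fin.sum_univ_succ]
    simp only [hξ0, hξs, sum_add_distrib, sum_sub_distrib, sum_const, card_univ, Fintype.card_fin,
      nsmul_eq_mul]
    rw [Fin.sum_univ_succ] at hx
    have : (n + 1 : ℝ) * D ω = ∑ i, C ω i := by
      simp only [hD]; field_simp
    push_cast at *
    linarith
  · simp [hξ0, hr0]
  · simp only [hξs, hrs, hcash]
    linarith

end SelRisk

theorem stmt18 [MeasurableSpace Ω] (μ : Measure Ω) [IsProbabilityMeasure μ]
    {d : ℕ} (hd : 2 ≤ d)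
    (ρ : (Ω → ℝ) → ℝ)
    (hconv : ∀ (ξ η : Ω → ℝ) (t : ℝ), 0 ≤ t → t ≤ 1 →
      ρ (fun ω => t * ξ ω + (1 - t) * η ω) ≤ t * ρ ξ + (1 - t) * ρ η)
    (hmono : ∀ (ξ η : Ω → ℝ), (∀ᵐ ω ∂μ, ξ ω ≤ η ω) → ρ η ≤ ρ ξ)
    (hcash : ∀ (ξ : Ω → ℝ) (c : ℝ), ρ (fun ω => ξ ω + c) = ρ ξ - c)
    (r : Fin d → (Ω → ℝ) → ℝ)
    (hr0 : ∀ ξ : Ω → ℝ, r ⟨0, by omega⟩ ξ = -(essInf ξ μ))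
    (hri : ∀ i : Fin d, (i : ℕ) ≠ 0 → r i = ρ)
    (C : Ω → Fin d → ℝ) (hC : MemLp C ∞ μ) (t : ℝ) :
    selRisk μ ∞ r (fun ω => (fun x => C ω + x) '' Hset d t) =
      {x : Fin d → ℝ |
        ((d : ℝ) - 1) * ρ (fun ω => (∑ i, C ω i) / ((d : ℝ) - 1)) - t ≤ ∑ i, x i} := by
  obtain ⟨n, rfl⟩ : ∃ n, d = n + 2 := ⟨d - 2, by omega⟩
  have hρ : ConvexOn ℝ Set.univ ρ := ⟨convex_univ, fun ξ _ η _ s u hs hu hsu => by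
    obtain rfl : u = 1 - s := by linarith
    exact hconv ξ η s hs (by linarith)⟩
  have hrs : ∀ j : Fin (n + 1), r j.succ = ρ := fun j => hri _ (Fin.val_ne_of_ne j.succ_ne_zero)
  have hd1 : ((n + 2 : ℕ) : ℝ) - 1 = n + 1 := by push_cast; ring
  rw [hd1]
  apply Set.Subset.antisymm
  · refine closure_minimal ?_ (isClosed_le continuous_const (by fun_prop))
    simp only [Set.iUnion_subset_iff]
    exact fun ξ hξ x hx => le_sum_of_mem_Sel_add_Hset hρ hmono hcash hr0 hrs hξ hx
  · intro x hx
    obtain ⟨ξ, hξ, hξx⟩ := exists_mem_Sel_add_Hset_of_le_sum hcash hr0 hrs hC hx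
    exact subset_closure (Set.mem_iUnion₂.2 ⟨ξ, hξ, hξx⟩)
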